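/- Adequacy: if Γ ⊢ t : A in the simply typed distributive λ-calculus and θ is a substitution with θ(x) ∈ ⟦B⟧ for every x:B ∈ Γ, then θ(t) ∈ ⟦A⟧. -/

import Mathlib

inductive Tm : Type
| var : ℕ → Tm
| lam : Tm → Tm
| app : Tm → Tm → Tm
| pair : Tm → Tm → Tm
| p1 : Tm → Tm
| p2 : Tm → Tm

namespace Tm

/-- Renaming of de Bruijn indices. -/
def rename (f : ℕ → ℕ) : Tm → Tm
| var n => var (f n)
| lam t => lam (t.rename (fun n => match n with | 0 => 0 | n+1 => f n + 1))
| app t s => app (t.rename f) (s.rename f)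
| pair t s => pair (t.rename f) (s.rename f)
| p1 t => p1 (t.rename f)
| p2 t => p2 (t.rename f)

/-- Capture-avoiding simultaneous substitution. -/
def subst (σ : ℕ → Tm) : Tm → Tm
| var n => σ n
| lam t => lam (t.subst (fun n => match n with | 0 => var 0 | n+1 => (σ n).rename Nat.succ))
| app t s => app (t.subst σ) (s.subst σ)
| pair t s => pair (t.subst σ) (s.subst σ)
| p1 t => p1 (t.subst σ)
| p2 t => p2 (t.subst σ)

/-- Substitution of the single (outermost) free variable: t[x := s]. -/
def subst1 (t s : Tm) : Tm :=
  t.subst (fun n => match n with | 0 => s | n+1 => var n)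

/-- One-step reduction of the distributive λ-calculus. -/
inductive Step : Tm → Tm → Prop
| beta (t s) : Step (app (lam t) s) (t.subst1 s)
| proj1 (t1 t2) : Step (p1 (pair t1 t2)) t1
| proj2 (t1 t2) : Step (p2 (pair t1 t2)) t2
| pairApp (t s u) : Step (app (pair t s) u) (pair (app t u) (app s u))
| projLam1 (t) : Step (p1 (lam t)) (lam (p1 t))
| projLam2 (t) : Step (p2 (lam t)) (lam (p2 t))
| lam_cong {t t'} : Step t t' → Step (lam t) (lam t')
| appL {t t' s} : Step t t' → Step (app t s) (app t' s)
| appR {t s s'} : Step s s' → Step (app t s) (app t s')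
| pairL {t t' s} : Step t t' → Step (pair t s) (pair t' s)
| pairR {t s s'} : Step s s' → Step (pair t s) (pair t s')
| p1_cong {t t'} : Step t t' → Step (p1 t) (p1 t')
| p2_cong {t t'} : Step t t' → Step (p2 t) (p2 t')

/-- Many-step reduction. -/
def Steps : Tm → Tm → Prop := Relation.ReflTransGen Step

/-- A term is normal when no rule applies anywhere in it. -/
def Normal (t : Tm) : Prop := ¬ ∃ s, Step t s

/-- All free variables are < k. -/
def closedUnder : ℕ → Tm → Prop
| k, var n => n < k
| k, lam t => closedUnder (k+1) t
| k, app t s => closedUnder k t ∧ closedUnder k s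
| k, pair t s => closedUnder k t ∧ closedUnder k s
| k, p1 t => closedUnder k t
| k, p2 t => closedUnder k t

def Closed (t : Tm) : Prop := closedUnder 0 t

/-- Values: variables, abstractions, pairs. -/
def IsValue : Tm → Prop
| var _ => True
| lam _ => True
| pair _ _ => True
| _ => False

/-- Neutral terms: variables, applications, projections. -/
def Neutral : Tm → Prop
| var _ => True
| app _ _ => True
| p1 _ => True
| p2 _ => True
| _ => False

/-- Strong normalization: every reduction sequence is finite. -/
def SN (t : Tm) : Prop := Acc (fun a b => Step b a) t

end Tm

inductive Ty : Type
| base : Ty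
| arr : Ty → Ty → Ty
| conj : Ty → Ty → Ty

/-- The least congruence containing distributivity A ⇒ (B ∧ C) ≡ (A ⇒ B) ∧ (A ⇒ C). -/
inductive Iso : Ty → Ty → Prop
| refl (A) : Iso A A
| symm {A B} : Iso A B → Iso B A
| trans {A B C} : Iso A B → Iso B C → Iso A C
| distr (A B C) : Iso (Ty.arr A (Ty.conj B C)) (Ty.conj (Ty.arr A B) (Ty.arr A C))
| arrL {A C} (B) : Iso A C → Iso (Ty.arr A B) (Ty.arr C B)
| arrR {B C} (A) : Iso B C → Iso (Ty.arr A B) (Ty.arr A C)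
| conjL {A C} (B) : Iso A C → Iso (Ty.conj A B) (Ty.conj C B)
| conjR {B C} (A) : Iso B C → Iso (Ty.conj A B) (Ty.conj A C)

/-- Typing, with contexts as lists of types (de Bruijn), including the conversion rule for ≡. -/
inductive Typing : List Ty → Tm → Ty → Prop
| var {Γ n A} : Γ[n]? = some A → Typing Γ (Tm.var n) A
| lam {Γ t A B} : Typing (A :: Γ) t B → Typing Γ (Tm.lam t) (Ty.arr A B)
| app {Γ t s A B} : Typing Γ t (Ty.arr A B) → Typing Γ s A → Typing Γ (Tm.app t s) B
| pair {Γ t s A B} : Typing Γ t A → Typing Γ s B → Typing Γ (Tm.pair t s) (Ty.conj A B)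
| p1 {Γ t A B} : Typing Γ t (Ty.conj A B) → Typing Γ (Tm.p1 t) A
| p2 {Γ t A B} : Typing Γ t (Ty.conj A B) → Typing Γ (Tm.p2 t) B
| iso {Γ t A B} : Typing Γ t A → Iso A B → Typing Γ t B

/-- Reducibility interpretation of types. -/
def Red : Ty → Tm → Prop
| Ty.base, t => Tm.SN t
| Ty.arr A B, t => ∀ s, Red A s → Red B (Tm.app t s)
| Ty.conj A B, t => Red A (Tm.p1 t) ∧ Red B (Tm.p2 t)

/-!
Tait–Girard reducibility. Each `Red A` is a reducibility candidate: its terms are strongly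
normalizing, it is closed under reduction, and it contains every neutral term all of whose
one-step reducts lie in it. Abstractions and pairs are shown reducible by induction on the strong
normalization of their components, inspecting the one-step reducts of the neutral terms
`app (lam u) s`, `p1 (pair t s)`, `p2 (pair t s)`. What is new compared with the simply typed
λ-calculus is that `Red` must be invariant under `≡`; for distributivity the reduction rules
`pairApp` and `projLam1`/`projLam2` are exactly what turns a reduct on one side into a reducible
term on the other. Adequacy then follows by induction on the typing derivation.
-/

namespace Tm

def up (σ : ℕ → Tm) : ℕ → Tm
  | 0 => var 0
  | n + 1 => (σ n).rename Nat.succ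

def cons (s : Tm) (σ : ℕ → Tm) : ℕ → Tm
  | 0 => s
  | n + 1 => σ n

theorem subst1_eq_subst_cons (t s : Tm) : t.subst1 s = t.subst (cons s var) := rfl

theorem rename_rename (t : Tm) (f g : ℕ → ℕ) :
    (t.rename f).rename g = t.rename (g ∘ f) := by
  induction t generalizing f g with
  | lam t ih =>
    simp only [rename, ih]
    congr 2
    funext n
    cases n <;> rfl
  | _ => simp_all [rename]

theorem subst_rename (t : Tm) (f : ℕ → ℕ) (σ : ℕ → Tm) :
    (t.rename f).subst σ = t.subst (σ ∘ f) := by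
  induction t generalizing f σ with
  | lam t ih =>
    simp only [rename, subst, ih]
    congr 2
    funext n
    cases n <;> rfl
  | _ => simp_all [rename, subst]

theorem rename_subst (t : Tm) (σ : ℕ → Tm) (f : ℕ → ℕ) :
    (t.subst σ).rename f = t.subst (fun n => (σ n).rename f) := by
  induction t generalizing σ f with
  | lam t ih =>
    simp only [rename, subst, ih]
    congr 2
    funext n
    cases n with
    | zero => rfl
    | succ n => simp [rename_rename, Function.comp_def]
  | _ => simp_all [rename, subst]

theorem subst_subst (t : Tm) (σ τ : ℕ → Tm) :
    (t.subst σ).subst τ = t.subst (fun n => (σ n).subst τ) := by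
  induction t generalizing σ τ with
  | lam t ih =>
    simp only [subst, ih]
    congr 2
    funext n
    cases n with
    | zero => rfl
    | succ n => simp [subst_rename, rename_subst, Function.comp_def]
  | _ => simp_all [subst]

theorem subst_var (t : Tm) : t.subst var = t := by
  induction t with
  | lam t ih =>
    simp only [subst]
    conv_rhs => rw [← ih]
    congr 2
    funext n
    cases n <;> rfl
  | _ => simp_all [subst]

theorem subst_up_subst1 (t s : Tm) (σ : ℕ → Tm) :
    (t.subst (up σ)).subst1 s = t.subst (cons s σ) := by
  rw [subst1_eq_subst_cons, subst_subst]
  congr 1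
  funext n
  cases n with
  | zero => rfl
  | succ n => exact (subst_rename _ _ _).trans (subst_var _)

theorem subst1_subst (t s : Tm) (σ : ℕ → Tm) :
    (t.subst1 s).subst σ = (t.subst (up σ)).subst1 (s.subst σ) := by
  rw [subst_up_subst1, subst1_eq_subst_cons, subst_subst]
  congr 1
  funext n
  cases n <;> rfl

theorem Step.subst {t t' : Tm} (h : Step t t') (σ : ℕ → Tm) :
    Step (t.subst σ) (t'.subst σ) := by
  induction h generalizing σ with
  | beta t s => rw [subst1_subst]; exact beta _ _
  | proj1 | proj2 | pairApp | projLam1 | projLam2 => constructor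
  | _ => constructor; simp_all

theorem sn_of_map {f : Tm → Tm} (hf : ∀ {a b}, Step a b → Step (f a) (f b)) {t : Tm}
    (h : SN (f t)) : SN t :=
  Subrelation.accessible hf (InvImage.accessible f h)

theorem sn_of_sn_app_left {t s : Tm} (h : SN (app t s)) : SN t := sn_of_map Step.appL h

theorem sn_of_sn_p1 {t : Tm} (h : SN (p1 t)) : SN t := sn_of_map Step.p1_cong h

theorem sn_of_sn_subst {t : Tm} {σ : ℕ → Tm} (h : SN (t.subst σ)) : SN t :=
  sn_of_map (fun h => h.subst σ) h

@[elab_as_elim]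
theorem SN.induction₂ {P : Tm → Tm → Prop}
    (ih : ∀ t s, (∀ t', Step t t' → P t' s) → (∀ s', Step s s' → P t s') → P t s)
    {t s : Tm} (ht : SN t) (hs : SN s) : P t s := by
  induction ht generalizing s with
  | intro t _ iht =>
    induction hs with
    | intro s hs ihs => exact ih t s (fun t' h => iht t' h (Acc.intro s hs)) ihs

end Tm

open Tm

/-- Girard's reducibility candidates: the conditions CR1–CR3. -/
structure IsCandidate (R : Tm → Prop) : Prop where
  sn : ∀ {t}, R t → SN t
  step : ∀ {t t'}, R t → Step t t' → R t'
  of_neutral : ∀ {t}, Neutral t → (∀ t', Step t t' → R t') → R t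

namespace IsCandidate

variable {R S : Tm → Prop}

theorem var (hR : IsCandidate R) (n : ℕ) : R (var n) :=
  hR.of_neutral trivial fun _ h => nomatch h

theorem arr (hR : IsCandidate R) (hS : IsCandidate S) :
    IsCandidate fun t => ∀ s, R s → S (app t s) where
  sn h := sn_of_sn_app_left (hS.sn (h _ (hR.var 0)))
  step h ht s hs := hS.step (h s hs) (Step.appL ht)
  of_neutral {t} ht h s hs := by
    induction hR.sn hs with
    | intro s _ ih =>
      refine hS.of_neutral trivial fun r hr => ?_
      cases hr with
      | beta | pairApp => exact ht.elim
      | appL h' => exact h _ h' s hs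
      | appR h' => exact ih _ h' (hR.step hs h')

theorem conj (hR : IsCandidate R) (hS : IsCandidate S) :
    IsCandidate fun t => R (p1 t) ∧ S (p2 t) where
  sn h := sn_of_sn_p1 (hR.sn h.1)
  step h ht := ⟨hR.step h.1 (Step.p1_cong ht), hS.step h.2 (Step.p2_cong ht)⟩
  of_neutral ht h := by
    constructor
    · refine hR.of_neutral trivial fun r hr => ?_
      cases hr with
      | proj1 | projLam1 => exact ht.elim
      | p1_cong h' => exact (h _ h').1
    · refine hS.of_neutral trivial fun r hr => ?_
      cases hr with
      | proj2 | projLam2 => exact ht.elim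
      | p2_cong h' => exact (h _ h').2

end IsCandidate

theorem isCandidate_sn : IsCandidate SN where
  sn h := h
  step h hs := h.inv hs
  of_neutral _ h := Acc.intro _ h

theorem isCandidate_red (A : Ty) : IsCandidate (Red A) := by
  induction A with
  | base => exact isCandidate_sn
  | arr A B hA hB => exact hA.arr hB
  | conj A B hA hB => exact hA.conj hB

section Red

variable {A B C : Ty} {t s : Tm}

theorem Red.sn (h : Red A t) : SN t := (isCandidate_red A).sn h

theorem Red.step {t' : Tm} (h : Red A t) (ht : Step t t') : Red A t' :=
  (isCandidate_red A).step h ht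

theorem red_of_neutral (ht : Neutral t) (h : ∀ t', Step t t' → Red A t') : Red A t :=
  (isCandidate_red A).of_neutral ht h

theorem red_var (A : Ty) (n : ℕ) : Red A (var n) := (isCandidate_red A).var n

/-- Asking for `u.subst1 s` to be reducible for every reducible `s`, rather than for the given
argument only, makes the hypothesis survive a reduction step in the argument without any
multi-step reduction of `u.subst1 s`. -/
theorem red_lam {u : Tm} (hu : ∀ s, Red A s → Red B (u.subst1 s)) :
    Red (Ty.arr A B) (lam u) := by
  intro s hs
  have hsn : SN u := sn_of_sn_subst (hu _ (red_var A 0)).sn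
  refine SN.induction₂ (fun u s ihu ihs hu hs => ?_) hsn hs.sn hu hs
  refine red_of_neutral trivial fun r hr => ?_
  cases hr with
  | beta => exact hu s hs
  | appL h =>
    cases h with
    | lam_cong h => exact ihu _ h (fun s hs => (hu s hs).step (h.subst _)) hs
  | appR h => exact ihs _ h hu (hs.step h)

theorem red_pair (ht : Red A t) (hs : Red B s) : Red (Ty.conj A B) (pair t s) := by
  refine SN.induction₂ (fun t s iht ihs ht hs => ?_) ht.sn hs.sn ht hs
  constructor
  · refine red_of_neutral trivial fun r hr => ?_
    cases hr with
    | proj1 => exact ht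
    | p1_cong h =>
      cases h with
      | pairL h => exact (iht _ h (ht.step h) hs).1
      | pairR h => exact (ihs _ h ht (hs.step h)).1
  · refine red_of_neutral trivial fun r hr => ?_
    cases hr with
    | proj2 => exact hs
    | p2_cong h =>
      cases h with
      | pairL h => exact (iht _ h (ht.step h) hs).2
      | pairR h => exact (ihs _ h ht (hs.step h)).2

theorem red_arr_p1 (ht : Red (Ty.arr A (Ty.conj B C)) t) : Red (Ty.arr A B) (p1 t) := by
  induction ht.sn with
  | intro t _ ih =>
    refine red_of_neutral trivial fun r hr => ?_
    cases hr with
    | proj1 =>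
      exact fun s hs => ((ht s hs).1.step (Step.p1_cong (Step.pairApp ..))).step (Step.proj1 ..)
    | projLam1 u => exact red_lam fun s hs => (ht s hs).1.step (Step.p1_cong (Step.beta ..))
    | p1_cong h => exact ih _ h (ht.step h)

theorem red_arr_p2 (ht : Red (Ty.arr A (Ty.conj B C)) t) : Red (Ty.arr A C) (p2 t) := by
  induction ht.sn with
  | intro t _ ih =>
    refine red_of_neutral trivial fun r hr => ?_
    cases hr with
    | proj2 =>
      exact fun s hs => ((ht s hs).2.step (Step.p2_cong (Step.pairApp ..))).step (Step.proj2 ..)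
    | projLam2 u => exact red_lam fun s hs => (ht s hs).2.step (Step.p2_cong (Step.beta ..))
    | p2_cong h => exact ih _ h (ht.step h)

theorem red_arr_conj (h₁ : Red (Ty.arr A B) (p1 t)) (h₂ : Red (Ty.arr A C) (p2 t)) :
    Red (Ty.arr A (Ty.conj B C)) t := by
  intro s hs
  refine SN.induction₂ (fun t s iht ihs h₁ h₂ hs => ?_)
    (sn_of_sn_p1 h₁.sn) hs.sn h₁ h₂ hs
  refine red_of_neutral trivial fun r hr => ?_
  cases hr with
  | beta u =>
    exact ⟨((h₁ s hs).step (Step.appL (Step.projLam1 u))).step (Step.beta ..),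
      ((h₂ s hs).step (Step.appL (Step.projLam2 u))).step (Step.beta ..)⟩
  | pairApp =>
    exact red_pair ((h₁ s hs).step (Step.appL (Step.proj1 ..)))
      ((h₂ s hs).step (Step.appL (Step.proj2 ..)))
  | appL h => exact iht _ h (h₁.step (Step.p1_cong h)) (h₂.step (Step.p2_cong h)) hs
  | appR h => exact ihs _ h h₁ h₂ (hs.step h)

theorem Iso.red_iff (h : Iso A B) : Red A t ↔ Red B t := by
  induction h generalizing t with
  | refl => rfl
  | symm _ ih => exact ih.symm
  | trans _ _ ih₁ ih₂ => exact ih₁.trans ih₂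
  | distr => exact ⟨fun h => ⟨red_arr_p1 h, red_arr_p2 h⟩, fun h => red_arr_conj h.1 h.2⟩
  | _ _ _ ih => simp only [Red, ih]

def RedSubst (Γ : List Ty) (θ : ℕ → Tm) : Prop := ∀ n B, Γ[n]? = some B → Red B (θ n)

theorem RedSubst.cons {Γ : List Ty} {θ : ℕ → Tm} (hθ : RedSubst Γ θ) (hs : Red A s) :
    RedSubst (A :: Γ) (Tm.cons s θ) := by
  rintro (_ | n) B h
  · cases h
    exact hs
  · exact hθ n B h

theorem adequacy (Γ : List Ty) (t : Tm) (A : Ty) (θ : ℕ → Tm)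
    (ht : Typing Γ t A) (hθ : ∀ n B, Γ[n]? = some B → Red B (θ n)) :
    Red A (t.subst θ) := by
  induction ht generalizing θ with
  | var h => exact hθ _ _ h
  | lam _ ih =>
    exact red_lam fun s hs => (subst_up_subst1 ..).symm ▸ ih _ (RedSubst.cons hθ hs)
  | app _ _ ih₁ ih₂ => exact ih₁ θ hθ _ (ih₂ θ hθ)
  | pair _ _ ih₁ ih₂ => exact red_pair (ih₁ θ hθ) (ih₂ θ hθ)
  | p1 _ ih => exact (ih θ hθ).1
  | p2 _ ih => exact (ih θ hθ).2
  | iso _ h ih => exact h.red_iff.mp (ih θ hθ)
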